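/- arXiv:1202.4553 — 2 statements merged into one kernel-verified Lean document; each statement's English description precedes it below -/
import Mathlib

section
/- Let T₁ and T₂ be Hermitian positive semidefinite n × n complex matrices. Then |Tr(log(I + T₂)) − Tr(log(I + T₁))| ≤ ‖T₂ − T₁‖₁, where ‖·‖₁ is the trace norm (sum of singular values). -/
open scoped ComplexOrder

open Matrix

/-- Trace norm: the sum of the singular values of `X`. -/
noncomputable def traceNorm {n : ℕ} (X : Matrix (Fin n) (Fin n) ℂ) : ℝ :=
  ∑ i, Real.sqrt ((Matrix.posSemidef_conjTranspose_mul_self X).1.eigenvalues i)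

/-! Let `P` be the positive part of `T₂ - T₁`, so that `T₂ ≤ T₁ + P` and
`Tr P ≤ ‖T₂ - T₁‖₁`. Since `det` is monotone on positive definite matrices,
`det (1 + T₂) ≤ det (1 + T₁ + P)`. Writing `P = Bᴴ B`, the matrix determinant lemma gives
`det (1 + T₁ + P) = det (1 + T₁) · det (1 + B (1 + T₁)⁻¹ Bᴴ)`, and the last factor is at
most `exp (Tr (B (1 + T₁)⁻¹ Bᴴ)) ≤ exp (Tr P)` because `∏ (1 + λᵢ) ≤ exp (∑ λᵢ)` and
`(1 + T₁)⁻¹ ≤ 1`. Taking logarithms bounds one side of the difference; exchanging `T₁` and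
`T₂` bounds the other. -/

open scoped MatrixOrder

namespace Matrix

variable {𝕜 : Type*} [RCLike 𝕜] {n : Type*} [Fintype n] [DecidableEq n]

lemma IsHermitian.trace_cfc {A : Matrix n n 𝕜} (hA : A.IsHermitian) (f : ℝ → ℝ) :
    trace (cfc f A) = ∑ i, (f (hA.eigenvalues i) : 𝕜) := by
  rw [hA.cfc_eq, IsHermitian.cfc, Unitary.conjStarAlgAut_apply, trace_mul_cycle,
    Unitary.coe_star_mul_self, one_mul, trace_diagonal]
  rfl

lemma IsHermitian.det_cfc {A : Matrix n n 𝕜} (hA : A.IsHermitian) (f : ℝ → ℝ) :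
    det (cfc f A) = ∏ i, (f (hA.eigenvalues i) : 𝕜) := by
  rw [hA.cfc_eq, IsHermitian.cfc, Unitary.conjStarAlgAut_apply, det_mul_right_comm,
    Unitary.mul_star_self_of_mem (SetLike.coe_mem _), one_mul, det_diagonal]
  rfl

variable {A C P Q T W : Matrix n n 𝕜}

lemma PosSemidef.exists_eq_conjTranspose_mul_self (hA : A.PosSemidef) :
    ∃ B : Matrix n n 𝕜, A = Bᴴ * B :=
  ⟨CFC.sqrt A, by rw [(CFC.sqrt_nonneg A).posSemidef.1.eq, CFC.sqrt_mul_sqrt_self A hA.nonneg]⟩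

lemma PosSemidef.det_one_add (hC : C.PosSemidef) :
    det (1 + C) = ∏ i, ((1 + hC.1.eigenvalues i : ℝ) : 𝕜) := by
  have h := hC.1.det_cfc (1 + id ·)
  rwa [cfc_const_add 1 id C, cfc_id ℝ C, map_one] at h

lemma PosSemidef.one_le_det_one_add (hC : C.PosSemidef) : 1 ≤ det (1 + C) := by
  rw [hC.det_one_add, ← RCLike.ofReal_prod, ← RCLike.ofReal_one, RCLike.ofReal_le_ofReal]
  exact Finset.one_le_prod fun i _ => le_add_of_nonneg_right (hC.eigenvalues_nonneg i)

lemma PosSemidef.det_one_add_le_exp_trace (hC : C.PosSemidef) :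
    det (1 + C) ≤ (Real.exp (RCLike.re (trace C)) : 𝕜) := by
  rw [hC.det_one_add, ← RCLike.ofReal_prod, RCLike.ofReal_le_ofReal,
    hC.1.trace_eq_sum_eigenvalues, map_sum, Real.exp_sum]
  refine Finset.prod_le_prod (fun i _ => ?_) fun i _ => ?_
  · linarith [hC.eigenvalues_nonneg i]
  · simpa [add_comm] using Real.add_one_le_exp (hC.1.eigenvalues i)

lemma PosDef.det_le_det_add (hW : W.PosDef) (hQ : Q.PosSemidef) : det W ≤ det (W + Q) := by
  obtain ⟨B, rfl⟩ := hQ.exists_eq_conjTranspose_mul_self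
  rw [det_add_mul _ _ hW.det_pos.ne'.isUnit]
  exact le_mul_of_one_le_right hW.det_pos.le
    (hW.inv.posSemidef.mul_mul_conjTranspose_same B).one_le_det_one_add

-- `1 - (1 + T)⁻¹ = (1 + T)⁻¹ (T + T²) (1 + T)⁻¹`
lemma PosSemidef.inv_one_add_le_one (hT : T.PosSemidef) : (1 + T)⁻¹ ≤ 1 := by
  rw [le_iff]
  have hW : (1 + T).PosDef := PosDef.one.add_posSemidef hT
  have hTW : (T * (1 + T)).PosSemidef := by
    rw [mul_add, mul_one]
    exact hT.add (by simpa [hT.1.eq] using posSemidef_conjTranspose_mul_self T)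
  convert hTW.mul_mul_conjTranspose_same (1 + T)⁻¹ using 1
  have hdet := hW.det_pos.ne'.isUnit
  rw [hW.inv.1.eq, mul_assoc, mul_assoc, mul_nonsing_inv _ hdet, mul_one]
  calc 1 - (1 + T)⁻¹ = (1 + T)⁻¹ * (1 + T) - (1 + T)⁻¹ := by rw [nonsing_inv_mul _ hdet]
    _ = (1 + T)⁻¹ * T := by rw [mul_add, mul_one, add_sub_cancel_left]

lemma PosSemidef.det_one_add_add_le (hT : T.PosSemidef) (hP : P.PosSemidef) :
    det (1 + T + P) ≤ det (1 + T) * (Real.exp (RCLike.re (trace P)) : 𝕜) := by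
  have hW : (1 + T).PosDef := PosDef.one.add_posSemidef hT
  obtain ⟨B, rfl⟩ := hP.exists_eq_conjTranspose_mul_self
  rw [det_add_mul _ _ hW.det_pos.ne'.isUnit]
  have hC := hW.inv.posSemidef.mul_mul_conjTranspose_same B
  have htrace : RCLike.re (trace (B * (1 + T)⁻¹ * Bᴴ)) ≤ RCLike.re (trace (Bᴴ * B)) := by
    have h := ((le_iff.mp hT.inv_one_add_le_one).mul_mul_conjTranspose_same B).trace_nonneg
    rw [mul_sub, sub_mul, mul_one, trace_sub, trace_mul_comm B Bᴴ, sub_nonneg] at h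
    exact RCLike.re_le_re h
  refine mul_le_mul_of_nonneg_left (hC.det_one_add_le_exp_trace.trans ?_) hW.det_pos.le
  exact RCLike.ofReal_le_ofReal.mpr (Real.exp_le_exp.mpr htrace)

lemma PosSemidef.det_one_add_le_det_one_add_mul_exp_trace {T₁ T₂ : Matrix n n 𝕜}
    (h₁ : T₁.PosSemidef) (h₂ : T₂.PosSemidef) (hP : P.PosSemidef) (hle : T₂ ≤ T₁ + P) :
    det (1 + T₂) ≤ det (1 + T₁) * (Real.exp (RCLike.re (trace P)) : 𝕜) :=
  calc det (1 + T₂) ≤ det (1 + T₂ + (T₁ + P - T₂)) :=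
        (PosDef.one.add_posSemidef h₂).det_le_det_add hle
    _ = det (1 + T₁ + P) := by congr 1; abel
    _ ≤ _ := h₁.det_one_add_add_le hP

lemma PosSemidef.log_re_det_one_add_sub_le {T₁ T₂ : Matrix n n 𝕜}
    (h₁ : T₁.PosSemidef) (h₂ : T₂.PosSemidef) (hP : P.PosSemidef) (hle : T₂ ≤ T₁ + P) :
    Real.log (RCLike.re (det (1 + T₂))) - Real.log (RCLike.re (det (1 + T₁))) ≤
      RCLike.re (trace P) := by
  have hpos (T : Matrix n n 𝕜) (hT : T.PosSemidef) : 0 < RCLike.re (det (1 + T)) :=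
    (RCLike.pos_iff.mp (PosDef.one.add_posSemidef hT).det_pos).1
  have hdet := RCLike.re_le_re (h₁.det_one_add_le_det_one_add_mul_exp_trace h₂ hP hle)
  rw [RCLike.re_mul_ofReal] at hdet
  rw [sub_le_iff_le_add', ← Real.log_exp (RCLike.re (trace P)),
    ← Real.log_mul (hpos T₁ h₁).ne' (Real.exp_pos _).ne']
  exact Real.log_le_log (hpos T₂ h₂) hdet

end Matrix

lemma traceNorm_neg {n : ℕ} (X : Matrix (Fin n) (Fin n) ℂ) :
    traceNorm (-X) = traceNorm X := by
  unfold traceNorm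
  congr! 3
  simp

lemma Matrix.IsHermitian.traceNorm_eq_sum_abs_eigenvalues {n : ℕ}
    {A : Matrix (Fin n) (Fin n) ℂ} (hA : A.IsHermitian) :
    traceNorm A = ∑ i, |hA.eigenvalues i| := by
  have habs : cfc Real.sqrt (Aᴴ * A) = cfc (fun x : ℝ => |x|) A := by
    rw [hA.eq, ← sq, ← cfc_comp_pow Real.sqrt 2 A (ha := hA.isSelfAdjoint)]
    simp only [Real.sqrt_sq_eq_abs]
  apply Complex.ofReal_injective
  calc (traceNorm A : ℂ) = trace (cfc Real.sqrt (Aᴴ * A)) := by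
        rw [traceNorm, Complex.ofReal_sum]
        exact ((posSemidef_conjTranspose_mul_self A).1.trace_cfc _).symm
    _ = _ := by
        rw [habs, Complex.ofReal_sum]
        exact hA.trace_cfc _

lemma Matrix.IsHermitian.exists_posSemidef_le_re_trace_le_traceNorm {n : ℕ}
    {A : Matrix (Fin n) (Fin n) ℂ} (hA : A.IsHermitian) :
    ∃ P : Matrix (Fin n) (Fin n) ℂ, P.PosSemidef ∧ A ≤ P ∧ (trace P).re ≤ traceNorm A := by
  refine ⟨cfc (fun x : ℝ => max x 0) A, (cfc_nonneg fun x _ => le_max_right x 0).posSemidef,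
    ?_, ?_⟩
  · calc A = cfc id A := (cfc_id ℝ A hA.isSelfAdjoint).symm
      _ ≤ _ := cfc_mono fun x _ => le_max_left x 0
  · rw [hA.trace_cfc, hA.traceNorm_eq_sum_abs_eigenvalues, Complex.re_sum]
    exact Finset.sum_le_sum fun i _ => max_le (le_abs_self _) (abs_nonneg _)

lemma log_re_det_one_add_sub_le_traceNorm {n : ℕ} {T₁ T₂ : Matrix (Fin n) (Fin n) ℂ}
    (h₁ : T₁.PosSemidef) (h₂ : T₂.PosSemidef) :
    Real.log (det (1 + T₂)).re - Real.log (det (1 + T₁)).re ≤ traceNorm (T₂ - T₁) := by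
  obtain ⟨P, hP, hle, htrace⟩ := (h₂.1.sub h₁.1).exists_posSemidef_le_re_trace_le_traceNorm
  exact (h₁.log_re_det_one_add_sub_le h₂ hP (sub_le_iff_le_add'.mp hle)).trans htrace

theorem stmt6 {n : ℕ} (T₁ T₂ : Matrix (Fin n) (Fin n) ℂ)
    (h1 : T₁.PosSemidef) (h2 : T₂.PosSemidef) :
    |Real.log (((1 : Matrix (Fin n) (Fin n) ℂ) + T₂).det.re) -
      Real.log (((1 : Matrix (Fin n) (Fin n) ℂ) + T₁).det.re)| ≤ traceNorm (T₂ - T₁) := by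
  refine abs_sub_le_iff.mpr ⟨log_re_det_one_add_sub_le_traceNorm h1 h2, ?_⟩
  rw [← traceNorm_neg, neg_sub]
  exact log_re_det_one_add_sub_le_traceNorm h2 h1
end

section
/- Let T be an n × n Hermitian positive semidefinite matrix and P an orthogonal projection with Q = I − P. Then Tr(log(I + T)) ≤ Tr(log(I + P·T·P)) + Tr(log(I + Q·T·Q)). (Berezin-type inequality.) -/
/-!
Let `R = 2P - 1`, a self-adjoint unitary, and `X = 1 + T`. Then `X + R X R = 2 (P X P + Q X Q)`
and, since `P Q = 0`, `P X P + Q X Q = (1 + P T P) (1 + Q T Q)`. The determinantal AM–GM inequality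
`det (X + Y) ≥ 2ⁿ √(det X det Y)` (conjugate by `X^{-1/2}` to reduce to `X = 1`, where it is
`1 + λ ≥ 2 √λ` on each eigenvalue), applied to `Y = R X R`, gives
`det (1 + T) ≤ det (1 + P T P) det (1 + Q T Q)`; then take logarithms.
-/

open scoped ComplexOrder MatrixOrder
open Matrix RCLike

lemma add_two_mul_sub_one_mul_mul_two_mul_sub_one {R : Type*} [Ring R] (p x : R) :
    x + (2 * p - 1) * x * (2 * p - 1) = 2 * (p * x * p + (1 - p) * x * (1 - p)) := by
  noncomm_ring

lemma IsIdempotentElem.mul_one_add_mul_add_one_sub_mul_one_add_mul {R : Type*} [Ring R] {p : R}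
    (hp : IsIdempotentElem p) (x : R) :
    p * (1 + x) * p + (1 - p) * (1 + x) * (1 - p) =
      (1 + p * x * p) * (1 + (1 - p) * x * (1 - p)) := by
  rw [show (1 + p * x * p) * (1 + (1 - p) * x * (1 - p)) =
      1 + p * x * p + (1 - p) * x * (1 - p) + p * x * (p * (1 - p)) * x * (1 - p) by noncomm_ring,
    hp.mul_one_sub_self,
    show p * (1 + x) * p + (1 - p) * (1 + x) * (1 - p) =
      p * p + (1 - p) * (1 - p) + p * x * p + (1 - p) * x * (1 - p) by noncomm_ring,
    hp.eq, hp.one_sub.eq]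
  noncomm_ring

namespace Matrix

variable {m 𝕜 : Type*} [Fintype m] [DecidableEq m] [RCLike 𝕜]

lemma PosSemidef.ofReal_re_det {A : Matrix m m 𝕜} (hA : A.PosSemidef) :
    ((re A.det : ℝ) : 𝕜) = A.det := by
  obtain ⟨x, -, hx⟩ := nonneg_iff_exists_ofReal.mp hA.det_nonneg
  rw [← hx, ofReal_re]

lemma PosSemidef.re_det_nonneg {A : Matrix m m 𝕜} (hA : A.PosSemidef) : 0 ≤ re A.det :=
  (nonneg_iff.mp hA.det_nonneg).1

lemma PosDef.re_det_pos {A : Matrix m m 𝕜} (hA : A.PosDef) : 0 < re A.det :=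
  (pos_iff.mp hA.det_pos).1

lemma PosSemidef.re_det_mul {A : Matrix m m 𝕜} (hA : A.PosSemidef) (z : 𝕜) :
    re (A.det * z) = re A.det * re z := by
  rw [← hA.ofReal_re_det, re_ofReal_mul, ofReal_re]

lemma IsHermitian.det_one_add {A : Matrix m m 𝕜} (hA : A.IsHermitian) :
    (1 + A).det = ((∏ i, (1 + hA.eigenvalues i) : ℝ) : 𝕜) := by
  have h : 1 + A = cfc (fun x : ℝ => 1 + x) A := by
    rw [cfc_add .., cfc_const_one .., cfc_id' ..]
  rw [h, hA.cfc_eq]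
  simp [IsHermitian.cfc, -Unitary.conjStarAlgAut_apply]

lemma PosSemidef.two_pow_mul_sqrt_re_det_le_re_det_one_add {Z : Matrix m m 𝕜}
    (hZ : Z.PosSemidef) :
    2 ^ Fintype.card m * √(re Z.det) ≤ re (1 + Z).det := by
  have hev := hZ.eigenvalues_nonneg
  rw [hZ.isHermitian.det_one_add, ofReal_re, hZ.isHermitian.det_eq_prod_eigenvalues,
    ← ofReal_prod, ofReal_re, Real.sqrt_prod _ fun i _ => hev i]
  calc 2 ^ Fintype.card m * ∏ i, √(hZ.isHermitian.eigenvalues i)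
      = ∏ i, 2 * √(hZ.isHermitian.eigenvalues i) := by
        rw [Finset.prod_mul_distrib, Finset.prod_const, Finset.card_univ]
    _ ≤ ∏ i, (1 + hZ.isHermitian.eigenvalues i) := by
        refine Finset.prod_le_prod (fun i _ => by positivity) fun i _ => ?_
        nlinarith [sq_nonneg (1 - √(hZ.isHermitian.eigenvalues i)), Real.sq_sqrt (hev i)]

lemma PosDef.two_pow_mul_sqrt_re_det_mul_le_re_det_add {X Y : Matrix m m 𝕜} (hX : X.PosDef)
    (hY : Y.PosSemidef) :
    2 ^ Fintype.card m * √(re X.det * re Y.det) ≤ re (X + Y).det := by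
  set S := CFC.sqrt X
  have hSS : S * S = X := CFC.sqrt_mul_sqrt_self X hX.posSemidef.nonneg
  have hS : IsUnit S.det :=
    (isUnit_iff_isUnit_det S).mp ((CFC.isUnit_sqrt_iff X hX.posSemidef.nonneg).mpr hX.isUnit)
  have hSdet : S.det * S.det = X.det := by rw [← det_mul, hSS]
  set Z := S⁻¹ * Y * S⁻¹
  have hZ : Z.PosSemidef := by
    have h := hY.mul_mul_conjTranspose_same S⁻¹
    rwa [(CFC.sqrt_nonneg X).posSemidef.isHermitian.inv.eq] at h
  have hY_eq : Y = S * Z * S := by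
    simp only [Z, ← mul_assoc, mul_nonsing_inv _ hS, one_mul]
    rw [mul_assoc, nonsing_inv_mul _ hS, mul_one]
  have hdetY : Y.det = X.det * Z.det := by
    rw [hY_eq, det_mul, det_mul, ← hSdet]; ring
  have hdetXY : (X + Y).det = X.det * (1 + Z).det := by
    rw [← hSdet, hY_eq, ← hSS, show S * S + S * Z * S = S * (1 + Z) * S by noncomm_ring,
      det_mul, det_mul]
    ring
  have hx := hX.posSemidef.re_det_mul
  rw [hdetXY, hdetY, hx, hx, ← mul_assoc, Real.sqrt_mul (mul_self_nonneg _),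
    Real.sqrt_mul_self hX.posSemidef.re_det_nonneg, mul_left_comm]
  exact mul_le_mul_of_nonneg_left hZ.two_pow_mul_sqrt_re_det_le_re_det_one_add
    hX.posSemidef.re_det_nonneg

lemma PosDef.two_pow_mul_re_det_le_re_det_add_unitary_conj {X U : Matrix m m 𝕜} (hX : X.PosDef)
    (hU : U ∈ unitary (Matrix m m 𝕜)) :
    2 ^ Fintype.card m * re X.det ≤ re (X + U * X * star U).det := by
  have hconj : (U * X * star U).det = X.det :=
    det_conj_of_mul_eq_one (Unitary.mul_star_self_of_mem hU) (Unitary.star_mul_self_of_mem hU)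
  have h := hX.two_pow_mul_sqrt_re_det_mul_le_re_det_add
    (hX.posSemidef.mul_mul_conjTranspose_same U)
  rwa [← star_eq_conjTranspose, hconj, Real.sqrt_mul_self hX.posSemidef.re_det_nonneg] at h

/-- `P X P + (1 - P) X (1 - P)` is the mean of `X` and its conjugate by the reflection `2 P - 1`. -/
lemma PosDef.re_det_le_re_det_pinching {X P : Matrix m m 𝕜} (hX : X.PosDef)
    (hP : IsStarProjection P) :
    re X.det ≤ re (P * X * P + (1 - P) * X * (1 - P)).det := by
  have hreflect : star (2 * P - 1) = 2 * P - 1 := by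
    simp [hP.isSelfAdjoint.star_eq, (Commute.ofNat_left 2 P).eq]
  have h := hX.two_pow_mul_re_det_le_re_det_add_unitary_conj hP.two_mul_sub_one_mem_unitary
  rw [hreflect, add_two_mul_sub_one_mul_mul_two_mul_sub_one, two_mul, ← two_smul 𝕜, det_smul,
    show (2 : 𝕜) ^ Fintype.card m = ((2 ^ Fintype.card m : ℝ) : 𝕜) by push_cast; rfl,
    re_ofReal_mul] at h
  exact le_of_mul_le_mul_left h (by positivity)

end Matrix

theorem stmt8 {n : ℕ} (T P : Matrix (Fin n) (Fin n) ℂ)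
    (hT : T.PosSemidef) (hPh : Pᴴ = P) (hPi : P * P = P) :
    Real.log (((1 : Matrix (Fin n) (Fin n) ℂ) + T).det.re) ≤
      Real.log (((1 : Matrix (Fin n) (Fin n) ℂ) + P * T * P).det.re) +
      Real.log (((1 : Matrix (Fin n) (Fin n) ℂ) + (1 - P) * T * (1 - P)).det.re) := by
  have hP : IsStarProjection P := ⟨hPi, hPh⟩
  have hX : (1 + T).PosDef := PosDef.one.add_posSemidef hT
  have hcompress {S : Matrix (Fin n) (Fin n) ℂ} (hS : Sᴴ = S) : (1 + S * T * S).PosDef := by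
    simpa only [hS] using PosDef.one.add_posSemidef (hT.mul_mul_conjTranspose_same S)
  have hA := hcompress hPh
  have hB := hcompress hP.one_sub.isSelfAdjoint
  have h := hX.re_det_le_re_det_pinching hP
  rw [hP.isIdempotentElem.mul_one_add_mul_add_one_sub_mul_one_add_mul, det_mul,
    hA.posSemidef.re_det_mul] at h
  calc _ ≤ Real.log (re (1 + P * T * P).det * re (1 + (1 - P) * T * (1 - P)).det) :=
        Real.log_le_log hX.re_det_pos h
    _ = _ := Real.log_mul hA.re_det_pos.ne' hB.re_det_pos.ne'
end
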